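/- Elliptic equation for the total head pressure: let Ω ⊆ ℝ² be open and ν > 0. Let u = (u₁,u₂) : Ω → ℝ² be of class C³, p : Ω → ℝ of class C², and f : Ω → ℝ² of class C¹ with div f = 0 on Ω. Suppose that −νΔu + (u·∇)u + ∇p = f and div u = 0 at every point of Ω. Then the total head pressure Φ = p + |u|²/2 satisfies, at every point of Ω, ΔΦ = ω² + (1/ν) div(Φ u) − (1/ν) f·u, where ω = ∂₂u₁ − ∂₁u₂ is the vorticity. -/

import Mathlib

noncomputable section
open MeasureTheory Filter
open scoped RealInnerProductSpace Topology

/-- The Euclidean plane. -/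
abbrev E2 := EuclideanSpace ℝ (Fin 2)

/-- standard basis vector -/
def e2 (i : Fin 2) : E2 := EuclideanSpace.single i 1

/-- divergence of a planar vector field: `div u = ∂₁u₁ + ∂₂u₂` -/
def vdiv (u : E2 → E2) (x : E2) : ℝ := ∑ i, fderiv ℝ u x (e2 i) i

/-- convection term `(u·∇)u`, with i-th component `∑ⱼ uⱼ ∂ⱼuᵢ` -/
def vconv (u : E2 → E2) (x : E2) : E2 := ∑ j, u x j • fderiv ℝ u x (e2 j)

/-- componentwise Laplacian `Δu` -/
def vlap (u : E2 → E2) (x : E2) : E2 :=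
  ∑ j, fderiv ℝ (fun y => fderiv ℝ u y (e2 j)) x (e2 j)

/-- gradient `∇p` of a scalar field, in coordinates -/
def sgrad (p : E2 → ℝ) (x : E2) : E2 := ∑ i, fderiv ℝ p x (e2 i) • e2 i

/-- Laplacian `Δp` of a scalar field -/
def slap (p : E2 → ℝ) (x : E2) : ℝ :=
  ∑ j, fderiv ℝ (fun y => fderiv ℝ p y (e2 j)) x (e2 j)

/-- `x^⊥ = (−x₂, x₁)` -/
def perp (x : E2) : E2 := (-(x 1)) • e2 0 + (x 0) • e2 1

/-- planar curl `∂₂u₁ − ∂₁u₂` -/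
def curl2 (u : E2 → E2) (x : E2) : ℝ :=
  fderiv ℝ u x (e2 1) 0 - fderiv ℝ u x (e2 0) 1

/-- action of the rate-of-strain tensor `S(u)(x) = Du(x) + Du(x)ᵀ` on a vector `n`:
`(Du n) + (Duᵀ n)`, where `(Duᵀ n)ᵢ = ∑ⱼ ∂ᵢuⱼ nⱼ`. -/
def Sapply (u : E2 → E2) (x n : E2) : E2 :=
  fderiv ℝ u x n + ∑ i, (⟪fderiv ℝ u x (e2 i), n⟫) • e2 i

/-- tangential part of `a` relative to a unit vector `n`: `a_τ = a − (a·n)n` -/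
def tang (n a : E2) : E2 := a - ⟪a, n⟫ • n

/-- the Hamel velocity field `u_k(x) = −(3/|x|²)x + k((3|x|−2)/|x|³)x^⊥` -/
def hamel (k : ℝ) (x : E2) : E2 :=
  (-(3 / ‖x‖ ^ 2)) • x + (k * (3 * ‖x‖ - 2) / ‖x‖ ^ 3) • perp x

/-- the open annulus `A = {x : 1 < |x| < 2}` -/
def annulus : Set E2 := {x | 1 < ‖x‖ ∧ ‖x‖ < 2}

section PlanarCalcHelpers

lemma e2_apply (i j : Fin 2) : e2 i j = if j = i then 1 else 0 := by
  simp [e2, EuclideanSpace.single_apply]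

lemma E2_sum_apply (w : Fin 2 → E2) (i : Fin 2) : (∑ j, w j) i = ∑ j, w j i := by
  simp [Fin.sum_univ_two, PiLp.add_apply]

lemma inner_E2 (a b : E2) : ⟪a, b⟫ = ∑ i, a i * b i := by
  simp [PiLp.inner_apply, RCLike.inner_apply, conj_trivial]
  ring

lemma fderiv_comp_apply {g : E2 → E2} {x : E2} (hg : DifferentiableAt ℝ g x) (i : Fin 2) (v : E2) :
    fderiv ℝ (fun y => g y i) x v = fderiv ℝ g x v i := by
  have h : (fun y => g y i) = fun y => (EuclideanSpace.proj i : E2 →L[ℝ] ℝ) (g y) := rfl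
  rw [h, fderiv_clm_apply (differentiableAt_const _) hg]
  simp

lemma diff_comp_apply {g : E2 → E2} {x : E2} (hg : DifferentiableAt ℝ g x) (i : Fin 2) :
    DifferentiableAt ℝ (fun y => g y i) x :=
  (EuclideanSpace.proj (𝕜 := ℝ) i).differentiableAt.comp x hg

lemma fd_apply_const {F : Type*} [NormedAddCommGroup F] [NormedSpace ℝ F]
    {c : E2 → (E2 →L[ℝ] F)} {x : E2} (hc : DifferentiableAt ℝ c x) (v w : E2) :
    fderiv ℝ (fun y => c y v) x w = fderiv ℝ c x w v := by
  rw [fderiv_clm_apply hc (differentiableAt_const v)]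
  simp

lemma fderiv_swap {F : Type*} [NormedAddCommGroup F] [NormedSpace ℝ F]
    {g : E2 → F} {x : E2} (hg : ContDiffAt ℝ 2 g x) (v w : E2) :
    fderiv ℝ (fun y => fderiv ℝ g y v) x w = fderiv ℝ (fun y => fderiv ℝ g y w) x v := by
  have hd : DifferentiableAt ℝ (fderiv ℝ g) x :=
    (hg.fderiv_right (m := 1) le_rfl).differentiableAt (by norm_num)
  rw [fd_apply_const hd, fd_apply_const hd]
  exact (hg.isSymmSndFDerivAt (by simp)) w v

lemma sum_smul_e2_apply (c : Fin 2 → ℝ) (i : Fin 2) : (∑ k, c k • e2 k) i = c i := by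
  rw [E2_sum_apply]
  fin_cases i <;> simp [Fin.sum_univ_two, PiLp.smul_apply, e2_apply]

end PlanarCalcHelpers

/-- Elliptic equation for the total head pressure: if `−νΔu + (u·∇)u + ∇p = f`
and `div u = 0` on an open set `Ω`, with `u ∈ C³`, `p ∈ C²`, `f ∈ C¹` and `div f = 0`, then
`ΔΦ = ω² + (1/ν) div(Φu) − (1/ν) f·u` on `Ω`, where `Φ = p + |u|²/2` and `ω = ∂₂u₁ − ∂₁u₂`. -/
theorem head_pressure_elliptic_equation
    (Ω : Set E2) (hΩ : IsOpen Ω) (ν : ℝ) (hν : 0 < ν)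
    (u : E2 → E2) (p : E2 → ℝ) (f : E2 → E2)
    (hu : ContDiffOn ℝ 3 u Ω) (hp : ContDiffOn ℝ 2 p Ω) (hf : ContDiffOn ℝ 1 f Ω)
    (hdivf : ∀ x ∈ Ω, vdiv f x = 0)
    (hns : ∀ x ∈ Ω, -(ν • vlap u x) + vconv u x + sgrad p x = f x)
    (hdivu : ∀ x ∈ Ω, vdiv u x = 0) :
    ∀ x ∈ Ω,
      slap (fun y => p y + ‖u y‖ ^ 2 / 2) x
        = (curl2 u x) ^ 2
          + (1/ν) * vdiv (fun y => (p y + ‖u y‖ ^ 2 / 2) • u y) x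
          - (1/ν) * ⟪f x, u x⟫ := by
  intro x hx
  have hν' : ν ≠ 0 := ne_of_gt hν
  have hmem : Ω ∈ 𝓝 x := hΩ.mem_nhds hx
  have huA : ∀ y ∈ Ω, ContDiffAt ℝ 3 u y := fun y hy => (hu y hy).contDiffAt (hΩ.mem_nhds hy)
  have hpA : ∀ y ∈ Ω, ContDiffAt ℝ 2 p y := fun y hy => (hp y hy).contDiffAt (hΩ.mem_nhds hy)
  have hfd : DifferentiableAt ℝ f x :=
    ((hf x hx).contDiffAt hmem).differentiableAt (by norm_num)
  have hud : ∀ y ∈ Ω, DifferentiableAt ℝ u y := fun y hy =>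
    (huA y hy).differentiableAt (by norm_num)
  have hpd : ∀ y ∈ Ω, DifferentiableAt ℝ p y := fun y hy =>
    (hpA y hy).differentiableAt (by norm_num)
  have hDc2 : ∀ y ∈ Ω, ∀ v : E2, ContDiffAt ℝ 2 (fun z => fderiv ℝ u z v) y := fun y hy v =>
    ((huA y hy).fderiv_right (by norm_num)).clm_apply contDiffAt_const
  have hDa : ∀ y ∈ Ω, ∀ v : E2, DifferentiableAt ℝ (fun z => fderiv ℝ u z v) y := fun y hy v =>
    (hDc2 y hy v).differentiableAt (by norm_num)
  have hD2a : ∀ v w : E2,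
      DifferentiableAt ℝ (fun z => fderiv ℝ (fun z' => fderiv ℝ u z' v) z w) x := fun v w =>
    (((hDc2 x hx v).fderiv_right (m := 1) (by norm_num)).clm_apply contDiffAt_const).differentiableAt
      (by norm_num)
  have hpd2 : ∀ v : E2, DifferentiableAt ℝ (fun z => fderiv ℝ p z v) x := fun v =>
    (((hpA x hx).fderiv_right (m := 1) (by norm_num)).clm_apply contDiffAt_const).differentiableAt (by norm_num)
  -- derivative of `div u` vanishes, in the form we need
  have hdivu' : ∀ y ∈ Ω, ∀ j : Fin 2,
      ∑ i, fderiv ℝ (fun z => fderiv ℝ u z (e2 j)) y (e2 i) i = 0 := by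
    intro y hy j
    have hy' : Ω ∈ 𝓝 y := hΩ.mem_nhds hy
    calc ∑ i, fderiv ℝ (fun z => fderiv ℝ u z (e2 j)) y (e2 i) i
        = ∑ i, fderiv ℝ (fun z => fderiv ℝ u z (e2 i) i) y (e2 j) := by
          refine Finset.sum_congr rfl fun i _ => ?_
          rw [fderiv_swap (g := u) ((huA y hy).of_le (by norm_num)) (e2 j) (e2 i)]
          exact (fderiv_comp_apply (hDa y hy (e2 i)) i (e2 j)).symm
      _ = fderiv ℝ (vdiv u) y (e2 j) := by
          rw [show vdiv u = fun z => ∑ i, fderiv ℝ u z (e2 i) i from rfl,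
            fderiv_fun_sum (fun i _ => diff_comp_apply (hDa y hy (e2 i)) i),
            ContinuousLinearMap.sum_apply]
      _ = 0 := by
          have hE : vdiv u =ᶠ[𝓝 y] fun _ => (0 : ℝ) :=
            Filter.eventuallyEq_of_mem hy' (fun z hz => hdivu z hz)
          rw [hE.fderiv_eq]
          simp
  -- the Navier-Stokes system, componentwise
  have hnsC : ∀ y ∈ Ω, ∀ i : Fin 2,
      fderiv ℝ p y (e2 i) = f y i + ν * vlap u y i - vconv u y i := by
    intro y hy i
    have h := congrArg (fun z : E2 => z i) (hns y hy)
    simp only [PiLp.add_apply, PiLp.neg_apply, PiLp.smul_apply, smul_eq_mul] at h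
    have hs : sgrad p y i = fderiv ℝ p y (e2 i) := by
      rw [show sgrad p y = ∑ k, fderiv ℝ p y (e2 k) • e2 k from rfl, sum_smul_e2_apply]
    rw [hs] at h
    linarith
  -- divergence of the Laplacian term vanishes
  have hlap0 : ∑ i, fderiv ℝ (fun y => vlap u y i) x (e2 i) = 0 := by
    have hvl : ∀ i : Fin 2, (fun y => vlap u y i)
        = fun y => ∑ j, fderiv ℝ (fun z => fderiv ℝ u z (e2 j)) y (e2 j) i := by
      intro i
      funext y
      rw [show vlap u y = ∑ j, fderiv ℝ (fun z => fderiv ℝ u z (e2 j)) y (e2 j) from rfl,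
        E2_sum_apply]
    calc ∑ i, fderiv ℝ (fun y => vlap u y i) x (e2 i)
        = ∑ i, ∑ j,
            fderiv ℝ (fun y => fderiv ℝ (fun z => fderiv ℝ u z (e2 j)) y (e2 j) i) x (e2 i) := by
          refine Finset.sum_congr rfl fun i _ => ?_
          rw [hvl i, fderiv_fun_sum (fun j _ => diff_comp_apply (hD2a (e2 j) (e2 j)) i),
            ContinuousLinearMap.sum_apply]
      _ = ∑ i, ∑ j,
            fderiv ℝ (fun y => fderiv ℝ (fun z => fderiv ℝ u z (e2 j)) y (e2 i)) x (e2 j) i := by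
          refine Finset.sum_congr rfl fun i _ => Finset.sum_congr rfl fun j _ => ?_
          rw [fderiv_comp_apply (hD2a (e2 j) (e2 j)) i (e2 i),
            fderiv_swap (hDc2 x hx (e2 j)) (e2 j) (e2 i)]
      _ = ∑ j, fderiv ℝ (fun y => ∑ i, fderiv ℝ (fun z => fderiv ℝ u z (e2 j)) y (e2 i) i)
            x (e2 j) := by
          rw [Finset.sum_comm]
          refine Finset.sum_congr rfl fun j _ => ?_
          rw [fderiv_fun_sum (fun i _ => diff_comp_apply (hD2a (e2 j) (e2 i)) i),
            ContinuousLinearMap.sum_apply]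
          exact (Finset.sum_congr rfl fun i _ =>
            (fderiv_comp_apply (hD2a (e2 j) (e2 i)) i (e2 j))).symm
      _ = 0 := by
          refine Finset.sum_eq_zero fun j _ => ?_
          have hE : (fun y => ∑ i, fderiv ℝ (fun z => fderiv ℝ u z (e2 j)) y (e2 i) i)
              =ᶠ[𝓝 x] fun _ => (0 : ℝ) :=
            Filter.eventuallyEq_of_mem hmem (fun z hz => hdivu' z hz j)
          rw [hE.fderiv_eq]
          simp
  -- divergence of the convection term
  have hconvdiv : ∑ i, fderiv ℝ (fun y => vconv u y i) x (e2 i)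
      = ∑ i, ∑ j, fderiv ℝ u x (e2 i) j * fderiv ℝ u x (e2 j) i := by
    have hvc : ∀ i : Fin 2, (fun y => vconv u y i)
        = fun y => ∑ j, u y j * fderiv ℝ u y (e2 j) i := by
      intro i
      funext y
      rw [show vconv u y = ∑ j, u y j • fderiv ℝ u y (e2 j) from rfl, E2_sum_apply]
      exact Finset.sum_congr rfl fun j _ => by simp [PiLp.smul_apply]
    calc ∑ i, fderiv ℝ (fun y => vconv u y i) x (e2 i)
        = ∑ i, ∑ j, (fderiv ℝ u x (e2 i) j * fderiv ℝ u x (e2 j) i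
            + u x j * fderiv ℝ (fun z => fderiv ℝ u z (e2 j)) x (e2 i) i) := by
          refine Finset.sum_congr rfl fun i _ => ?_
          rw [hvc i, fderiv_fun_sum (fun j _ => (diff_comp_apply (hud x hx) j).fun_mul
            (diff_comp_apply (hDa x hx (e2 j)) i)), ContinuousLinearMap.sum_apply]
          refine Finset.sum_congr rfl fun j _ => ?_
          rw [fderiv_fun_mul (diff_comp_apply (hud x hx) j) (diff_comp_apply (hDa x hx (e2 j)) i)]
          simp only [ContinuousLinearMap.add_apply, ContinuousLinearMap.coe_smul',
            Pi.smul_apply, smul_eq_mul]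
          rw [fderiv_comp_apply (hud x hx) j (e2 i),
            fderiv_comp_apply (hDa x hx (e2 j)) i (e2 i)]
          ring
      _ = ∑ i, ∑ j, fderiv ℝ u x (e2 i) j * fderiv ℝ u x (e2 j) i := by
          have h0 := hdivu' x hx 0
          have h1 := hdivu' x hx 1
          simp only [Fin.sum_univ_two] at h0 h1 ⊢
          linear_combination u x 0 * h0 + u x 1 * h1
  -- Laplacian of the pressure
  have hdiff_vlap : ∀ i : Fin 2, DifferentiableAt ℝ (fun y => vlap u y i) x := by
    intro i
    have h : (fun y => vlap u y i)
        = fun y => ∑ j, fderiv ℝ (fun z => fderiv ℝ u z (e2 j)) y (e2 j) i := by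
      funext y
      rw [show vlap u y = ∑ j, fderiv ℝ (fun z => fderiv ℝ u z (e2 j)) y (e2 j) from rfl,
        E2_sum_apply]
    rw [h]
    exact DifferentiableAt.fun_sum fun j _ => diff_comp_apply (hD2a (e2 j) (e2 j)) i
  have hdiff_vconv : ∀ i : Fin 2, DifferentiableAt ℝ (fun y => vconv u y i) x := by
    intro i
    have h : (fun y => vconv u y i) = fun y => ∑ j, u y j * fderiv ℝ u y (e2 j) i := by
      funext y
      rw [show vconv u y = ∑ j, u y j • fderiv ℝ u y (e2 j) from rfl, E2_sum_apply]
      exact Finset.sum_congr rfl fun j _ => by simp [PiLp.smul_apply]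
    rw [h]
    exact DifferentiableAt.fun_sum fun j _ => (diff_comp_apply (hud x hx) j).mul
      (diff_comp_apply (hDa x hx (e2 j)) i)
  have hT : slap p x = -∑ i, ∑ j, fderiv ℝ u x (e2 i) j * fderiv ℝ u x (e2 j) i := by
    have step : ∀ i : Fin 2, fderiv ℝ (fun y => fderiv ℝ p y (e2 i)) x (e2 i)
        = fderiv ℝ (fun y => f y i) x (e2 i) + ν * fderiv ℝ (fun y => vlap u y i) x (e2 i)
          - fderiv ℝ (fun y => vconv u y i) x (e2 i) := by
      intro i
      have hE : (fun y => fderiv ℝ p y (e2 i)) =ᶠ[𝓝 x]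
          fun y => f y i + ν * vlap u y i - vconv u y i :=
        Filter.eventuallyEq_of_mem hmem (fun z hz => hnsC z hz i)
      rw [hE.fderiv_eq,
        fderiv_fun_sub ((diff_comp_apply hfd i).fun_add ((hdiff_vlap i).const_mul ν)) (hdiff_vconv i),
        fderiv_fun_add (diff_comp_apply hfd i) ((hdiff_vlap i).const_mul ν),
        fderiv_const_mul (hdiff_vlap i) ν]
      simp only [ContinuousLinearMap.sub_apply, ContinuousLinearMap.add_apply,
        ContinuousLinearMap.coe_smul', Pi.smul_apply, smul_eq_mul]
    have hfsum : ∑ i, fderiv ℝ (fun y => f y i) x (e2 i) = 0 := by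
      have h : ∑ i, fderiv ℝ (fun y => f y i) x (e2 i) = vdiv f x :=
        Finset.sum_congr rfl fun i _ => fderiv_comp_apply hfd i (e2 i)
      rw [h, hdivf x hx]
    have hsl : slap p x = ∑ i, (fderiv ℝ (fun y => f y i) x (e2 i)
        + ν * fderiv ℝ (fun y => vlap u y i) x (e2 i)
        - fderiv ℝ (fun y => vconv u y i) x (e2 i)) :=
      Finset.sum_congr rfl fun i _ => step i
    rw [hsl]
    simp only [Fin.sum_univ_two] at hfsum hlap0 hconvdiv ⊢
    linear_combination hfsum + ν * hlap0 - hconvdiv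
  -- first derivative of the total head pressure
  have hre : (fun z => p z + ‖u z‖ ^ 2 / 2) = fun z => p z + ⟪u z, u z⟫ * (1 / 2) := by
    funext z
    rw [real_inner_self_eq_norm_sq]
    ring
  have hΦd : ∀ y ∈ Ω, ∀ v : E2, fderiv ℝ (fun z => p z + ‖u z‖ ^ 2 / 2) y v
      = fderiv ℝ p y v + ⟪u y, fderiv ℝ u y v⟫ := by
    intro y hy v
    have hi : DifferentiableAt ℝ (fun z => ⟪u z, u z⟫) y := (hud y hy).inner ℝ (hud y hy)
    rw [hre, fderiv_fun_add (hpd y hy) (hi.mul_const (1 / 2))]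
    simp only [ContinuousLinearMap.add_apply]
    congr 1
    rw [fderiv_mul_const hi (1 / 2)]
    simp only [ContinuousLinearMap.coe_smul', Pi.smul_apply, smul_eq_mul]
    rw [fderiv_inner_apply (𝕜 := ℝ) (hud y hy) (hud y hy),
      real_inner_comm (fderiv ℝ u y v) (u y)]
    ring
  have hΦdiff : DifferentiableAt ℝ (fun z => p z + ‖u z‖ ^ 2 / 2) x := by
    rw [hre]
    exact (hpd x hx).add (((hud x hx).inner ℝ (hud x hx)).mul_const (1 / 2))
  -- Laplacian of the total head pressure
  have hS : slap (fun y => p y + ‖u y‖ ^ 2 / 2) x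
      = slap p x + ⟪u x, vlap u x⟫
        + ∑ j, ⟪fderiv ℝ u x (e2 j), fderiv ℝ u x (e2 j)⟫ := by
    have step : ∀ j : Fin 2,
        fderiv ℝ (fun y => fderiv ℝ (fun z => p z + ‖u z‖ ^ 2 / 2) y (e2 j)) x (e2 j)
        = fderiv ℝ (fun y => fderiv ℝ p y (e2 j)) x (e2 j)
          + (⟪u x, fderiv ℝ (fun z => fderiv ℝ u z (e2 j)) x (e2 j)⟫
            + ⟪fderiv ℝ u x (e2 j), fderiv ℝ u x (e2 j)⟫) := by
      intro j
      have hE : (fun y => fderiv ℝ (fun z => p z + ‖u z‖ ^ 2 / 2) y (e2 j))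
          =ᶠ[𝓝 x] fun y => fderiv ℝ p y (e2 j) + ⟪u y, fderiv ℝ u y (e2 j)⟫ :=
        Filter.eventuallyEq_of_mem hmem (fun z hz => hΦd z hz (e2 j))
      rw [hE.fderiv_eq, fderiv_fun_add (hpd2 (e2 j)) ((hud x hx).inner ℝ (hDa x hx (e2 j)))]
      simp only [ContinuousLinearMap.add_apply]
      congr 1
      rw [fderiv_inner_apply (𝕜 := ℝ) (hud x hx) (hDa x hx (e2 j))]
    have h1 : slap (fun y => p y + ‖u y‖ ^ 2 / 2) x
        = ∑ j, (fderiv ℝ (fun y => fderiv ℝ p y (e2 j)) x (e2 j)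
          + (⟪u x, fderiv ℝ (fun z => fderiv ℝ u z (e2 j)) x (e2 j)⟫
            + ⟪fderiv ℝ u x (e2 j), fderiv ℝ u x (e2 j)⟫)) :=
      Finset.sum_congr rfl fun j _ => step j
    rw [h1, Finset.sum_add_distrib, Finset.sum_add_distrib,
      show vlap u x = ∑ j, fderiv ℝ (fun z => fderiv ℝ u z (e2 j)) x (e2 j) from rfl,
      inner_sum,
      show slap p x = ∑ j, fderiv ℝ (fun y => fderiv ℝ p y (e2 j)) x (e2 j) from rfl]
    ring
  -- inner product of the equation with u
  have hNu : ν * ⟪u x, vlap u x⟫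
      = ⟪vconv u x, u x⟫ + ⟪sgrad p x, u x⟫ - ⟪f x, u x⟫ := by
    have h2 : ν • vlap u x = vconv u x + sgrad p x - f x := by
      have h := hns x hx
      rw [← h]
      abel
    have h3 := congrArg (fun z : E2 => ⟪z, u x⟫) h2
    simp only [inner_add_left, inner_sub_left, real_inner_smul_left] at h3
    have hc : ⟪u x, vlap u x⟫ = ⟪vlap u x, u x⟫ := real_inner_comm _ _
    rw [hc]
    linarith
  -- divergence of Φ u
  have hDiv : vdiv (fun y => (p y + ‖u y‖ ^ 2 / 2) • u y) x
      = ⟪sgrad p x, u x⟫ + ⟪vconv u x, u x⟫ := by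
    have h1 : ∀ i : Fin 2, fderiv ℝ (fun y => (p y + ‖u y‖ ^ 2 / 2) • u y) x (e2 i) i
        = (fderiv ℝ p x (e2 i) + ⟪u x, fderiv ℝ u x (e2 i)⟫) * u x i
          + (p x + ‖u x‖ ^ 2 / 2) * fderiv ℝ u x (e2 i) i := by
      intro i
      rw [← fderiv_comp_apply (hΦdiff.fun_smul (hud x hx)) i (e2 i),
        show (fun y => ((p y + ‖u y‖ ^ 2 / 2) • u y) i)
          = fun y => (p y + ‖u y‖ ^ 2 / 2) * u y i from funext fun y => by
            simp [PiLp.smul_apply],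
        fderiv_fun_mul hΦdiff (diff_comp_apply (hud x hx) i)]
      simp only [ContinuousLinearMap.add_apply, ContinuousLinearMap.coe_smul',
        Pi.smul_apply, smul_eq_mul]
      rw [hΦd x hx (e2 i), fderiv_comp_apply (hud x hx) i (e2 i)]
      ring
    have h2 : vdiv (fun y => (p y + ‖u y‖ ^ 2 / 2) • u y) x
        = ∑ i, ((fderiv ℝ p x (e2 i) + ⟪u x, fderiv ℝ u x (e2 i)⟫) * u x i
          + (p x + ‖u x‖ ^ 2 / 2) * fderiv ℝ u x (e2 i) i) :=
      Finset.sum_congr rfl fun i _ => h1 i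
    have hsg : ∀ i : Fin 2, sgrad p x i = fderiv ℝ p x (e2 i) := fun i => by
      rw [show sgrad p x = ∑ k, fderiv ℝ p x (e2 k) • e2 k from rfl, sum_smul_e2_apply]
    have hvcc : ∀ i : Fin 2, vconv u x i = ∑ j, u x j * fderiv ℝ u x (e2 j) i := fun i => by
      rw [show vconv u x = ∑ j, u x j • fderiv ℝ u x (e2 j) from rfl, E2_sum_apply]
      exact Finset.sum_congr rfl fun j _ => by simp [PiLp.smul_apply]
    have hd0 : fderiv ℝ u x (e2 0) 0 + fderiv ℝ u x (e2 1) 1 = 0 := by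
      have h := hdivu x hx
      rw [show vdiv u x = ∑ i, fderiv ℝ u x (e2 i) i from rfl, Fin.sum_univ_two] at h
      exact h
    rw [h2]
    simp only [inner_E2, hsg, hvcc, Fin.sum_univ_two]
    linear_combination (p x + ‖u x‖ ^ 2 / 2) * hd0
  -- the pointwise algebraic identity for the vorticity
  have hOm : ∑ j, ⟪fderiv ℝ u x (e2 j), fderiv ℝ u x (e2 j)⟫
      - ∑ i, ∑ j, fderiv ℝ u x (e2 i) j * fderiv ℝ u x (e2 j) i = (curl2 u x) ^ 2 := by
    have hd0 : fderiv ℝ u x (e2 0) 0 + fderiv ℝ u x (e2 1) 1 = 0 := by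
      have h := hdivu x hx
      rw [show vdiv u x = ∑ i, fderiv ℝ u x (e2 i) i from rfl, Fin.sum_univ_two] at h
      exact h
    simp only [inner_E2, Fin.sum_univ_two,
      show curl2 u x = fderiv ℝ u x (e2 1) 0 - fderiv ℝ u x (e2 0) 1 from rfl]
    ring
  -- assemble
  have hIV : ⟪u x, vlap u x⟫
      = (⟪vconv u x, u x⟫ + ⟪sgrad p x, u x⟫ - ⟪f x, u x⟫) / ν := by
    rw [eq_div_iff hν']
    linarith
  rw [hS, hT, hDiv, hIV]
  linear_combination hOm
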